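/- In the centralizer Z̄_{m,n} of Ḡ'_{n-m} in F[Ḡ_n], the elements u_{k|n} = Σ_{i=k+1}^{n}(1−ε_i) t_{ki} (k,i) (1−ε_i), for 1 ≤ k ≤ m, pairwise commute, and moreover ε_k u_{k|n} = u_{k|n} ε_k = 0 and g·u_{k|n} = u_{k|n}·g for all g ∈ G^m. -/

import Mathlib

open MonoidAlgebra

/-- The group algebra `ℤ[G]`, used as an ambient ring in which `G ∪ {0}` embeds as
`{0} ∪ {single g 1 | g ∈ G}`. -/
abbrev GA (G : Type*) [Group G] := MonoidAlgebra ℤ G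

/-- `a` is an entry in `G ∪ {0}`. -/
def IsEnt {G : Type*} [Group G] (a : GA G) : Prop := a = 0 ∨ ∃ g : G, a = single g 1

/-- An `n × n` matrix with entries in `G ∪ {0}` such that every row and every column
contains at most one nonzero entry. -/
def IsRC {G : Type*} [Group G] {n : ℕ} (M : Matrix (Fin n) (Fin n) (GA G)) : Prop :=
  (∀ i, {j | M i j ≠ 0}.Subsingleton) ∧ (∀ j, {i | M i j ≠ 0}.Subsingleton) ∧
    ∀ i j, IsEnt (M i j)

theorem IsEnt.mul {G : Type*} [Group G] {a b : GA G} (ha : IsEnt a) (hb : IsEnt b) :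
    IsEnt (a * b) := by
  rcases ha with ha | ⟨g, rfl⟩
  · exact Or.inl (by simp [ha])
  rcases hb with hb | ⟨g', rfl⟩
  · exact Or.inl (by simp [hb])
  · exact Or.inr ⟨g * g', by simp [MonoidAlgebra.single_mul_single]⟩

theorem exists_of_mul_ne_zero {G : Type*} [Group G] {n : ℕ}
    {M N : Matrix (Fin n) (Fin n) (GA G)} {i j : Fin n} (h : (M * N) i j ≠ 0) :
    ∃ k, M i k ≠ 0 ∧ N k j ≠ 0 := by
  by_contra hc
  push_neg at hc
  apply h
  rw [Matrix.mul_apply]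
  refine Finset.sum_eq_zero fun k _ => ?_
  by_cases hk : M i k = 0
  · simp [hk]
  · simp [hc k hk]

/-- The semigroup `Ḡ_n` of `n × n` matrices over `G ∪ {0}` with at most one nonzero entry
in each row and each column, realized as a submonoid of the matrix ring over `ℤ[G]`. -/
def GBar (G : Type*) [Group G] (n : ℕ) : Submonoid (Matrix (Fin n) (Fin n) (GA G)) where
  carrier := {M | IsRC M}
  one_mem' := by
    have key : ∀ a b : Fin n, (1 : Matrix (Fin n) (Fin n) (GA G)) a b ≠ 0 → a = b := by
      intro a b h
      by_contra hab
      simp [Matrix.one_apply, hab] at h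
    refine ⟨fun i => ?_, fun j => ?_, fun i j => ?_⟩
    · intro a ha b hb
      exact (key i a ha).symm.trans (key i b hb)
    · intro a ha b hb
      exact (key a j ha).trans (key b j hb).symm
    · by_cases h : i = j
      · subst h
        exact Or.inr ⟨1, by simp [Matrix.one_apply, MonoidAlgebra.one_def]⟩
      · exact Or.inl (by simp [Matrix.one_apply, h])
  mul_mem' := by
    rintro M N ⟨hMr, hMc, hMe⟩ ⟨hNr, hNc, hNe⟩
    refine ⟨fun i => ?_, fun j => ?_, fun i j => ?_⟩
    · intro a ha b hb
      obtain ⟨k, hk1, hk2⟩ := exists_of_mul_ne_zero ha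
      obtain ⟨k', hk1', hk2'⟩ := exists_of_mul_ne_zero hb
      have : k = k' := hMr i hk1 hk1'
      subst this
      exact hNr k hk2 hk2'
    · intro a ha b hb
      obtain ⟨k, hk1, hk2⟩ := exists_of_mul_ne_zero ha
      obtain ⟨k', hk1', hk2'⟩ := exists_of_mul_ne_zero hb
      have : k = k' := hNc j hk2 hk2'
      subst this
      exact hMc k hk1 hk1'
    · by_cases h : (M * N) i j = 0
      · exact Or.inl h
      obtain ⟨k, hk1, hk2⟩ := exists_of_mul_ne_zero h
      have hsum : (M * N) i j = M i k * N k j := by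
        rw [Matrix.mul_apply]
        refine Finset.sum_eq_single k (fun b _ hb => ?_) (by simp)
        by_cases hbz : M i b = 0
        · simp [hbz]
        · exact absurd (hMr i hbz hk1) hb
      rw [hsum]
      exact (hMe i k).mul (hNe k j)

/-- The idempotent `ε_j ∈ Ḡ_n`: the diagonal matrix with `0` in position `(j,j)` and
`1` in the other diagonal positions. -/
noncomputable def epsEl (G : Type*) [Group G] {n : ℕ} (j : Fin n) : GBar G n :=
  ⟨Matrix.diagonal (fun i => if i = j then 0 else 1), by
    have key : ∀ a b : Fin n,
        Matrix.diagonal (fun i : Fin n => if i = j then (0 : GA G) else 1) a b ≠ 0 → a = b := by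
      intro a b h
      by_contra hab
      simp [Matrix.diagonal_apply_ne _ hab] at h
    refine ⟨fun i => ?_, fun k => ?_, fun i k => ?_⟩
    · intro a ha b hb
      exact (key i a ha).symm.trans (key i b hb)
    · intro a ha b hb
      exact (key a k ha).trans (key b k hb).symm
    · by_cases h : i = k
      · subst h
        by_cases hij : i = j
        · exact Or.inl (by simp [Matrix.diagonal_apply_eq, hij])
        · exact Or.inr ⟨1, by simp [Matrix.diagonal_apply_eq, hij, MonoidAlgebra.one_def]⟩
      · exact Or.inl (by simp [Matrix.diagonal_apply_ne _ h])⟩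

/-- The action of `S_n` on `G^n` by permuting coordinates. -/
def permHom (G : Type*) [Group G] (n : ℕ) : Equiv.Perm (Fin n) →* MulAut (Fin n → G) where
  toFun σ :=
    { toFun := fun g => g ∘ σ.symm
      invFun := fun g => g ∘ σ
      left_inv := fun g => by ext i; simp
      right_inv := fun g => by ext i; simp
      map_mul' := fun g h => rfl }
  map_one' := by ext g i; rfl
  map_mul' := fun σ τ => by ext g i; simp [Equiv.Perm.mul_def]

/-- The wreath product `G_n = G^n ⋊ S_n`. -/
abbrev Wreath (G : Type*) [Group G] (n : ℕ) :=
  SemidirectProduct (Fin n → G) (Equiv.Perm (Fin n)) (permHom G n)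

/-- The monoid embedding of the wreath product `G_n` into the matrices over `G ∪ {0}`:
`(g,σ)` goes to the matrix whose `(i,j)` entry is `g_i` if `σ(j) = i` and `0` otherwise. -/
noncomputable def wreathHom (G : Type*) [Group G] (n : ℕ) :
    Wreath G n →* Matrix (Fin n) (Fin n) (GA G) where
  toFun x := Matrix.of fun i j => if x.right j = i then single (x.left i) 1 else 0
  map_one' := by
    apply Matrix.ext
    intro i j
    by_cases h : i = j <;>
      simp [Matrix.one_apply, h, MonoidAlgebra.one_def, eq_comm]
  map_mul' := by
    rintro ⟨a, σ⟩ ⟨b, τ⟩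
    apply Matrix.ext
    intro i j
    rw [Matrix.mul_apply, Finset.sum_eq_single (τ j)]
    · simp only [SemidirectProduct.mul_left, SemidirectProduct.mul_right, Matrix.of_apply]
      rw [Equiv.Perm.mul_apply]
      by_cases h : σ (τ j) = i
      · rw [if_pos h, if_pos h]
        simp only [if_true]
        rw [MonoidAlgebra.single_mul_single]
        congr 1
        have hs : σ.symm i = τ j := by rw [← h]; simp
        simp [permHom, Pi.mul_apply, hs]
      · rw [if_neg h, if_neg h, zero_mul]
    · intro b' _ hb'
      simp only [Matrix.of_apply]
      exact mul_eq_zero_of_right _ (if_neg fun hc => hb' hc.symm)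
    · simp

theorem wreathHom_mem_GBar (G : Type*) [Group G] (n : ℕ) (x : Wreath G n) :
    wreathHom G n x ∈ GBar G n := by
  have key : ∀ i j : Fin n, wreathHom G n x i j ≠ 0 → x.right j = i := by
    intro i j h
    by_contra hc
    simp [wreathHom, hc] at h
  refine ⟨fun i => ?_, fun j => ?_, fun i j => ?_⟩
  · intro a ha b hb
    exact x.right.injective ((key i a ha).trans (key i b hb).symm)
  · intro a ha b hb
    exact (key a j ha).symm.trans (key b j hb)
  · by_cases h : x.right j = i
    · exact Or.inr ⟨x.left i, by simp [wreathHom, h]⟩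
    · exact Or.inl (by simp [wreathHom, h])

/-- The wreath product `G_n` as the submonoid of `Ḡ_n` of matrices with exactly one
nonzero entry in each row and each column. -/
noncomputable def GFull (G : Type*) [Group G] (n : ℕ) :
    Submonoid (Matrix (Fin n) (Fin n) (GA G)) :=
  MonoidHom.mrange (wreathHom G n)

theorem GFull_le_GBar (G : Type*) [Group G] (n : ℕ) : GFull G n ≤ GBar G n := by
  rintro M ⟨x, rfl⟩
  exact wreathHom_mem_GBar G n x

/-- An element of the wreath product, viewed inside `Ḡ_n`. -/
noncomputable def wEl {G : Type*} [Group G] {n : ℕ} (x : Wreath G n) : GBar G n :=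
  ⟨wreathHom G n x, wreathHom_mem_GBar G n x⟩

/-- `h^{(i)} ∈ G^n`: the tuple with `h` in the `i`-th coordinate and `1` elsewhere. -/
def coordEl {G : Type*} [Group G] {n : ℕ} (i : Fin n) (h : G) : Fin n → G :=
  fun j => if j = i then h else 1

/-- `t_{ki} = Σ_{h ∈ G} h^{(k)} (h⁻¹)^{(i)} ∈ F[G^n] ⊆ F[Ḡ_n]`. -/
noncomputable def tEl (F : Type*) [Field F] (G : Type*) [Group G] [Fintype G] {n : ℕ}
    (k i : Fin n) : MonoidAlgebra F (GBar G n) :=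
  ∑ h : G, single (wEl (⟨coordEl k h * coordEl i h⁻¹, 1⟩ : Wreath G n)) (1 : F)

/-- `u_{k|n} = Σ_{i>k} (1−ε_i) t_{ki} (k,i) (1−ε_i) ∈ F[Ḡ_n]`. -/
noncomputable def uEl (F : Type*) [Field F] (G : Type*) [Group G] [Fintype G] {n : ℕ}
    (k : Fin n) : MonoidAlgebra F (GBar G n) :=
  ∑ i ∈ Finset.Ioi k,
    (1 - single (epsEl G i) (1 : F)) * tEl F G k i *
      single (wEl (⟨1, Equiv.swap k i⟩ : Wreath G n)) (1 : F) *
      (1 - single (epsEl G i) (1 : F))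

/-!
Write `p_i = 1 - ε_i` and `T_{ki} = t_{ki} (k,i) = Σ_h h^{(k)} (h⁻¹)^{(i)} (k,i)`. Since `(k,i)`
conjugates `ε_j` into `ε_{(k,i) j}`, the `i`-th summand of `u_{k|n}` equals `p_k p_i T_{ki}`: it is
killed by `ε_k` on both sides, and it commutes with every diagonal `g ∈ G^n` because conjugation by
`g` only reindexes the sum over `h`. For `k < l`, reindexing the sum over `G` gives
`T_{ki} T_{lj} = T_{lj} T_{k,(l,j) i}`, and the `p`'s, being commuting idempotents, only see the set
of their indices; so the summand `(i, j)` of `u_k u_l` equals the summand `(j, (l,j) i)` of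
`u_l u_k`, and `(i, j) ↦ (j, (l,j) i)` is a bijection between the index sets.
-/
section WreathRelations

open Equiv

variable {G : Type*} [Group G] {n : ℕ}

theorem wreath_mk_mul_mk (a b : Fin n → G) (σ τ : Perm (Fin n)) :
    (⟨a, σ⟩ * ⟨b, τ⟩ : Wreath G n) = ⟨a * (b ∘ σ.symm), σ * τ⟩ :=
  rfl

theorem wreath_mk_one_mul_mk (a b : Fin n → G) (τ : Perm (Fin n)) :
    (⟨a, 1⟩ * ⟨b, τ⟩ : Wreath G n) = ⟨a * b, τ⟩ :=
  rfl

/-- `h^{(k)} (h⁻¹)^{(i)} (k,i)`, so that `t_{ki} (k,i) = Σ_h tswap k i h`. -/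
def tswap (k i : Fin n) (h : G) : Wreath G n :=
  ⟨coordEl k h * coordEl i h⁻¹, swap k i⟩

theorem mk_mul_mk_swap (k i : Fin n) (h : G) :
    (⟨coordEl k h * coordEl i h⁻¹, 1⟩ * ⟨1, swap k i⟩ : Wreath G n) = tswap k i h := by
  rw [wreath_mk_one_mul_mk, mul_one, tswap]

theorem tswap_mul_tswap {k i l j : Fin n} (hkl : k ≠ l) (hkj : k ≠ j) (h h' : G) :
    tswap k i h * tswap l j h' =
      tswap l j h' * tswap k (swap l j i) (h * (coordEl l h' * coordEl j h'⁻¹) i) := by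
  simp only [tswap, wreath_mk_mul_mk]
  congr 1
  · funext x
    simp only [Pi.mul_apply, Function.comp_apply, coordEl, symm_swap, swap_apply_def]
    split_ifs <;> simp_all
  · rw [mul_swap_eq_swap_mul (swap l j) k, swap_apply_of_ne_of_ne hkl hkj, swap_apply_self]

theorem mk_one_mul_tswap (g : Fin n → G) (k i : Fin n) (h : G) :
    (⟨g, 1⟩ : Wreath G n) * tswap k i h = tswap k i (g k * h * (g i)⁻¹) * ⟨g, 1⟩ := by
  simp only [tswap]
  rw [wreath_mk_one_mul_mk, wreath_mk_mul_mk, mul_one]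
  congr 1
  funext x
  simp only [Pi.mul_apply, Function.comp_apply, coordEl, symm_swap, swap_apply_def]
  split_ifs <;> simp_all [mul_assoc]

end WreathRelations

section EpsRelations

variable {G : Type*} [Group G] {n : ℕ}

theorem wEl_mul (x y : Wreath G n) : wEl (x * y) = wEl x * wEl y :=
  Subtype.ext (map_mul (wreathHom G n) x y)

theorem coe_epsEl (j : Fin n) :
    (epsEl G j : Matrix (Fin n) (Fin n) (GA G)) =
      Matrix.diagonal fun i => if i = j then 0 else 1 :=
  rfl

theorem epsEl_mul_self (j : Fin n) : epsEl G j * epsEl G j = epsEl G j := by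
  ext : 1
  simp only [Submonoid.coe_mul, coe_epsEl, Matrix.diagonal_mul_diagonal]
  congr 1
  funext i
  split_ifs <;> simp

theorem epsEl_commute (i j : Fin n) : Commute (epsEl G i) (epsEl G j) := by
  ext : 1
  simp only [Submonoid.coe_mul, coe_epsEl, Matrix.diagonal_mul_diagonal]
  congr 1
  funext a
  split_ifs <;> simp

theorem epsEl_mul_wEl (j : Fin n) (x : Wreath G n) :
    epsEl G j * wEl x = wEl x * epsEl G (x.right.symm j) := by
  ext a b : 2
  simp only [Submonoid.coe_mul, coe_epsEl, Matrix.diagonal_mul, Matrix.mul_diagonal, wEl,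
    wreathHom, MonoidHom.coe_mk, OneHom.coe_mk, Matrix.of_apply, Equiv.eq_symm_apply]
  split_ifs <;> simp_all

end EpsRelations

section AlgebraRelations

open Equiv

section Semiring

variable {R : Type*} [Semiring R] {G : Type*} [Group G] {n : ℕ}

theorem single_one_mul_single_one {M : Type*} [Monoid M] (a b : M) :
    single a (1 : R) * single b 1 = single (a * b) 1 := by
  rw [single_mul_single, one_mul]

theorem isIdempotentElem_single_epsEl (i : Fin n) :
    IsIdempotentElem (single (epsEl G i) (1 : R)) := by
  rw [IsIdempotentElem, single_one_mul_single_one, epsEl_mul_self]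

theorem commute_single_mk_one_single_epsEl (g : Fin n → G) (j : Fin n) :
    Commute (single (wEl (⟨g, 1⟩ : Wreath G n)) (1 : R)) (single (epsEl G j) 1) :=
  single_commute_single (epsEl_mul_wEl j ⟨g, 1⟩).symm (Commute.one_left 1)

variable [Fintype G]

variable (R G) in
/-- `t_{ki} (k,i)`. -/
noncomputable def tswapSum (k i : Fin n) : MonoidAlgebra R (GBar G n) :=
  ∑ h : G, single (wEl (tswap k i h)) 1

theorem single_epsEl_mul_tswapSum (j k i : Fin n) :
    single (epsEl G j) (1 : R) * tswapSum R G k i =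
      tswapSum R G k i * single (epsEl G (swap k i j)) 1 := by
  simp only [tswapSum, Finset.mul_sum, Finset.sum_mul, single_one_mul_single_one, epsEl_mul_wEl]
  simp [tswap]

theorem tswapSum_mul_single_epsEl (j k i : Fin n) :
    tswapSum R G k i * single (epsEl G j) (1 : R) =
      single (epsEl G (swap k i j)) 1 * tswapSum R G k i := by
  rw [single_epsEl_mul_tswapSum, swap_apply_self]

theorem tswapSum_mul_tswapSum {k i l j : Fin n} (hkl : k ≠ l) (hkj : k ≠ j) :
    tswapSum R G k i * tswapSum R G l j = tswapSum R G l j * tswapSum R G k (swap l j i) := by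
  rw [tswapSum, tswapSum, tswapSum, Finset.sum_mul_sum, Finset.sum_mul_sum, Finset.sum_comm]
  refine Finset.sum_congr rfl fun h' _ => ?_
  refine Fintype.sum_equiv (Equiv.mulRight ((coordEl l h' * coordEl j h'⁻¹) i)) _ _ fun h => ?_
  rw [single_one_mul_single_one, single_one_mul_single_one, ← wEl_mul, ← wEl_mul,
    tswap_mul_tswap hkl hkj, coe_mulRight]

theorem commute_single_mk_one_tswapSum (g : Fin n → G) (k i : Fin n) :
    Commute (single (wEl (⟨g, 1⟩ : Wreath G n)) (1 : R)) (tswapSum R G k i) := by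
  rw [Commute, SemiconjBy, tswapSum, Finset.mul_sum, Finset.sum_mul]
  refine Fintype.sum_equiv ((Equiv.mulLeft (g k)).trans (Equiv.mulRight (g i)⁻¹)) _ _
    fun h => ?_
  rw [single_one_mul_single_one, single_one_mul_single_one, ← wEl_mul, ← wEl_mul,
    mk_one_mul_tswap, trans_apply, coe_mulLeft, coe_mulRight]

end Semiring

theorem tEl_mul_single_swap {F : Type*} [Field F] {G : Type*} [Group G] [Fintype G] {n : ℕ}
    (k i : Fin n) :
    tEl F G k i * single (wEl (⟨1, swap k i⟩ : Wreath G n)) 1 = tswapSum F G k i := by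
  rw [tEl, tswapSum, Finset.sum_mul]
  refine Finset.sum_congr rfl fun h _ => ?_
  rw [single_one_mul_single_one, ← wEl_mul, mk_mul_mk_swap]

section Ring

variable {R : Type*} [Ring R] {G : Type*} [Group G] {n : ℕ}

variable (R G) in
noncomputable def epsCompl (i : Fin n) : MonoidAlgebra R (GBar G n) :=
  1 - single (epsEl G i) 1

theorem single_epsEl_mul_epsCompl_self (i : Fin n) :
    single (epsEl G i) (1 : R) * epsCompl R G i = 0 :=
  (isIdempotentElem_single_epsEl i).mul_one_sub_self

theorem epsCompl_mul_single_epsEl_self (i : Fin n) :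
    epsCompl R G i * single (epsEl G i) (1 : R) = 0 :=
  (isIdempotentElem_single_epsEl i).one_sub_mul_self

theorem isIdempotentElem_epsCompl (i : Fin n) : IsIdempotentElem (epsCompl R G i) :=
  (isIdempotentElem_single_epsEl i).one_sub

theorem epsCompl_commute (i j : Fin n) : Commute (epsCompl R G i) (epsCompl R G j) :=
  have h := single_commute_single (epsEl_commute i j) (Commute.one_left (1 : R))
  Commute.sub_right (Commute.one_right _) (Commute.sub_left (Commute.one_left _) h)

theorem mul_mul_self_of_commute {M : Type*} [Monoid M] {a b : M} (ha : IsIdempotentElem a)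
    (hb : IsIdempotentElem b) (hab : Commute a b) : a * b * a = a * b * b := by
  rw [mul_assoc, ← hab.eq, ← mul_assoc, ha, mul_assoc, hb]

theorem epsCompl_mul_epsCompl_swap (k i x : Fin n) :
    epsCompl R G k * epsCompl R G i * epsCompl R G (swap k i x) =
      epsCompl R G k * epsCompl R G i * epsCompl R G x := by
  have key := mul_mul_self_of_commute (isIdempotentElem_epsCompl (R := R) (G := G) k)
    (isIdempotentElem_epsCompl i) (epsCompl_commute k i)
  rcases eq_or_ne x k with rfl | hxk
  · rw [swap_apply_left, key]
  rcases eq_or_ne x i with rfl | hxi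
  · rw [swap_apply_right, key]
  · rw [swap_apply_of_ne_of_ne hxk hxi]

theorem epsCompl_mul_epsCompl_mul_swap (k i a b : Fin n) :
    epsCompl R G k * epsCompl R G i * (epsCompl R G (swap k i a) * epsCompl R G (swap k i b)) =
      epsCompl R G k * epsCompl R G i * (epsCompl R G a * epsCompl R G b) := by
  rw [← mul_assoc, epsCompl_mul_epsCompl_swap, mul_assoc, (epsCompl_commute a _).eq, ← mul_assoc,
    epsCompl_mul_epsCompl_swap, mul_assoc, (epsCompl_commute b a).eq]

theorem commute_single_mk_one_epsCompl (g : Fin n → G) (j : Fin n) :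
    Commute (single (wEl (⟨g, 1⟩ : Wreath G n)) (1 : R)) (epsCompl R G j) :=
  (Commute.one_right _).sub_right (commute_single_mk_one_single_epsEl g j)

variable [Fintype G]

theorem tswapSum_mul_epsCompl (j k i : Fin n) :
    tswapSum R G k i * epsCompl R G j = epsCompl R G (swap k i j) * tswapSum R G k i := by
  rw [epsCompl, epsCompl, mul_sub, sub_mul, mul_one, one_mul, tswapSum_mul_single_epsEl]

variable (R G) in
noncomputable def uTerm (k i : Fin n) : MonoidAlgebra R (GBar G n) :=
  epsCompl R G k * epsCompl R G i * tswapSum R G k i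

theorem single_epsEl_mul_uTerm (k i : Fin n) :
    single (epsEl G k) (1 : R) * uTerm R G k i = 0 := by
  rw [uTerm, ← mul_assoc, ← mul_assoc, single_epsEl_mul_epsCompl_self, zero_mul, zero_mul]

theorem uTerm_mul_single_epsEl (k i : Fin n) :
    uTerm R G k i * single (epsEl G k) (1 : R) = 0 := by
  rw [uTerm, mul_assoc, tswapSum_mul_single_epsEl, swap_apply_left, ← mul_assoc,
    mul_assoc _ (epsCompl R G i), epsCompl_mul_single_epsEl_self, mul_zero, zero_mul]

theorem commute_single_mk_one_uTerm (g : Fin n → G) (k i : Fin n) :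
    Commute (single (wEl (⟨g, 1⟩ : Wreath G n)) (1 : R)) (uTerm R G k i) :=
  ((commute_single_mk_one_epsCompl g k).mul_right (commute_single_mk_one_epsCompl g i)).mul_right
    (commute_single_mk_one_tswapSum g k i)

theorem uTerm_mul_uTerm_eq (k i l j : Fin n) :
    uTerm R G k i * uTerm R G l j =
      epsCompl R G k * epsCompl R G i * (epsCompl R G (swap k i l) * epsCompl R G (swap k i j)) *
        (tswapSum R G k i * tswapSum R G l j) := by
  simp only [uTerm, mul_assoc]
  rw [← mul_assoc (tswapSum R G k i), tswapSum_mul_epsCompl, mul_assoc,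
    ← mul_assoc (tswapSum R G k i), tswapSum_mul_epsCompl, mul_assoc]

theorem uTerm_mul_uTerm {k i l j : Fin n} (hkl : k ≠ l) (hkj : k ≠ j) :
    uTerm R G k i * uTerm R G l j = uTerm R G l j * uTerm R G k (swap l j i) := by
  have hc : Commute (epsCompl R G k * epsCompl R G i) (epsCompl R G l * epsCompl R G j) :=
    ((epsCompl_commute k l).mul_right (epsCompl_commute k j)).mul_left
      ((epsCompl_commute i l).mul_right (epsCompl_commute i j))
  rw [uTerm_mul_uTerm_eq, uTerm_mul_uTerm_eq, swap_apply_of_ne_of_ne hkl hkj, swap_apply_self,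
    epsCompl_mul_epsCompl_mul_swap, tswapSum_mul_tswapSum hkl hkj, hc.eq]

end Ring

end AlgebraRelations

section UElRelations

open Equiv

variable {F : Type*} [Field F] {G : Type*} [Group G] [Fintype G] {n : ℕ}

theorem uEl_eq_sum_uTerm (k : Fin n) : uEl F G k = ∑ i ∈ Finset.Ioi k, uTerm F G k i := by
  refine Finset.sum_congr rfl fun i _ => ?_
  change epsCompl F G i * tEl F G k i * single _ 1 * epsCompl F G i = _
  rw [mul_assoc _ (tEl F G k i), tEl_mul_single_swap, mul_assoc, tswapSum_mul_epsCompl,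
    swap_apply_right, ← mul_assoc, (epsCompl_commute i k).eq, uTerm]

theorem lt_swap_apply {α : Type*} [DecidableEq α] [LT α] {k a b x : α} (ha : k < a)
    (hb : k < b) (hx : k < x) : k < swap a b x := by
  rw [swap_apply_def]
  split_ifs <;> assumption

theorem uEl_commute_of_lt {k l : Fin n} (hkl : k < l) : Commute (uEl F G k) (uEl F G l) := by
  rw [Commute, SemiconjBy, uEl_eq_sum_uTerm, uEl_eq_sum_uTerm, Finset.sum_mul_sum,
    Finset.sum_mul_sum, ← Finset.sum_product', ← Finset.sum_product']
  refine Finset.sum_nbij' (fun p => (p.2, swap l p.2 p.1)) (fun q => (swap l q.1 q.2, q.1))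
    ?_ ?_ ?_ ?_ ?_
  · rintro ⟨i, j⟩ hij
    simp only [Finset.mem_product, Finset.mem_Ioi] at hij ⊢
    exact ⟨hij.2, lt_swap_apply hkl (hkl.trans hij.2) hij.1⟩
  · rintro ⟨j, i⟩ hji
    simp only [Finset.mem_product, Finset.mem_Ioi] at hji ⊢
    exact ⟨lt_swap_apply hkl (hkl.trans hji.1) hji.2, hji.1⟩
  · rintro ⟨i, j⟩ -
    simp only [swap_apply_self]
  · rintro ⟨j, i⟩ -
    simp only [swap_apply_self]
  · rintro ⟨i, j⟩ hij
    simp only [Finset.mem_product, Finset.mem_Ioi] at hij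
    exact uTerm_mul_uTerm hkl.ne (hkl.trans hij.2).ne

theorem uEl_commute (k l : Fin n) : Commute (uEl F G k) (uEl F G l) := by
  rcases lt_trichotomy k l with h | rfl | h
  · exact uEl_commute_of_lt h
  · exact Commute.refl _
  · exact (uEl_commute_of_lt h).symm

theorem single_epsEl_mul_uEl (k : Fin n) : single (epsEl G k) (1 : F) * uEl F G k = 0 := by
  rw [uEl_eq_sum_uTerm, Finset.mul_sum]
  exact Finset.sum_eq_zero fun i _ => single_epsEl_mul_uTerm k i

theorem uEl_mul_single_epsEl (k : Fin n) : uEl F G k * single (epsEl G k) (1 : F) = 0 := by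
  rw [uEl_eq_sum_uTerm, Finset.sum_mul]
  exact Finset.sum_eq_zero fun i _ => uTerm_mul_single_epsEl k i

theorem commute_single_mk_one_uEl (g : Fin n → G) (k : Fin n) :
    Commute (single (wEl (⟨g, 1⟩ : Wreath G n)) (1 : F)) (uEl F G k) := by
  rw [uEl_eq_sum_uTerm]
  exact Commute.sum_right _ _ _ fun i _ => commute_single_mk_one_uTerm g k i

end UElRelations

theorem uEl_relations_general (F : Type*) [Field F] (G : Type*) [Group G] [Fintype G]
    (n m : ℕ) :
    (∀ k l : Fin n, (k : ℕ) < m → (l : ℕ) < m →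
      uEl F G k * uEl F G l = uEl F G l * uEl F G k) ∧
    (∀ k : Fin n, (k : ℕ) < m →
      single (epsEl G k) (1 : F) * uEl F G k = 0 ∧
      uEl F G k * single (epsEl G k) (1 : F) = 0) ∧
    (∀ (k : Fin n) (g : Fin n → G), (k : ℕ) < m → (∀ i : Fin n, m ≤ (i : ℕ) → g i = 1) →
      single (wEl (⟨g, 1⟩ : Wreath G n)) (1 : F) * uEl F G k =
        uEl F G k * single (wEl (⟨g, 1⟩ : Wreath G n)) (1 : F)) := by
  exact ⟨fun k l _ _ => (uEl_commute k l).eq,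
    fun k _ => ⟨single_epsEl_mul_uEl k, uEl_mul_single_epsEl k⟩,
    fun k g _ _ => (commute_single_mk_one_uEl g k).eq⟩

/-- In the centralizer `Z̄_{m,n}` of `Ḡ'_{n−m}` in `F[Ḡ_n]`, the elements
`u_{k|n} = Σ_{i>k} (1−ε_i) t_{ki} (k,i) (1−ε_i)`, `1 ≤ k ≤ m`, pairwise commute; moreover
`ε_k u_{k|n} = u_{k|n} ε_k = 0` and `g·u_{k|n} = u_{k|n}·g` for all `g ∈ G^m`. -/
theorem uEl_relations (F : Type*) [Field F] (G : Type*) [Group G] [Fintype G]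
    (n m : ℕ) (hm : m ≤ n) :
    (∀ k l : Fin n, (k : ℕ) < m → (l : ℕ) < m →
      uEl F G k * uEl F G l = uEl F G l * uEl F G k) ∧
    (∀ k : Fin n, (k : ℕ) < m →
      single (epsEl G k) (1 : F) * uEl F G k = 0 ∧
      uEl F G k * single (epsEl G k) (1 : F) = 0) ∧
    (∀ (k : Fin n) (g : Fin n → G), (k : ℕ) < m → (∀ i : Fin n, m ≤ (i : ℕ) → g i = 1) →
      single (wEl (⟨g, 1⟩ : Wreath G n)) (1 : F) * uEl F G k =
        uEl F G k * single (wEl (⟨g, 1⟩ : Wreath G n)) (1 : F)) :=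
  uEl_relations_general F G n m
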